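/- arXiv:1112.3003 — 2 statements merged into one kernel-verified Lean document; each statement's English description precedes it below -/
import Mathlib

section
/- Callebaut inequality for weighted geometric means (lower part): for positive definite matrices A_1,...,A_m, B_1,...,B_m and s ∈ [0,1], one has ∑_{j=1}^m (A_j ♯ B_j) ≤ (∑_{j=1}^m A_j ♯_s B_j) ♯ (∑_{j=1}^m A_j ♯_(1-s) B_j) in the Loewner order. -/
open Matrix Finset
open scoped ComplexOrder

/-- Real power of a matrix via the spectral decomposition (junk value if not Hermitian). -/
noncomputable def mrpow {l : Type*} [Fintype l] [DecidableEq l] (A : Matrix l l ℂ) (r : ℝ) :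
    Matrix l l ℂ :=
  if hA : A.IsHermitian then
    (hA.eigenvectorUnitary : Matrix l l ℂ) *
      Matrix.diagonal (fun i => ((hA.eigenvalues i ^ r : ℝ) : ℂ)) *
      (star hA.eigenvectorUnitary : Matrix l l ℂ)
  else A

/-- Weighted matrix geometric mean `A ♯ₜ B = A^(1/2) (A^(-1/2) B A^(-1/2))^t A^(1/2)`. -/
noncomputable def wgmean {l : Type*} [Fintype l] [DecidableEq l] (A B : Matrix l l ℂ) (t : ℝ) :
    Matrix l l ℂ :=
  mrpow A (1/2) * mrpow (mrpow A (-(1/2)) * B * mrpow A (-(1/2))) t * mrpow A (1/2)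

/-- Loewner order: `A ≤ B` iff `B - A` is positive semidefinite. -/
def loewnerLE {l : Type*} [Fintype l] [DecidableEq l] (A B : Matrix l l ℂ) : Prop :=
  (B - A).PosSemidef

/-!
Write `A♯ₜB` for `wgmean A B t`. For each `j` the block matrix
`[[Aⱼ♯ₛBⱼ, Aⱼ♯Bⱼ], [Aⱼ♯Bⱼ, Aⱼ♯₁₋ₛBⱼ]]` is positive semidefinite, because its Schur complement
`A♯₁₋ₛB - (A♯B)(A♯ₛB)⁻¹(A♯B)` vanishes: all three means are `A^½ C^t A^½` for the same
`C = A^-½ B A^-½`. Summing over `j` keeps the block matrix positive semidefinite, and Ando's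
characterisation of the geometric mean finishes the proof: if `[[P, G], [G, Q]] ≥ 0` with `P, Q > 0`
and `G` Hermitian, then `G ≤ P♯Q`. Indeed the Schur complement gives `G P⁻¹ G ≤ Q`, that is
`H² ≤ M` for `H = P^-½ G P^-½` and `M = P^-½ Q P^-½`; then `H ≤ |H| = (H²)^½ ≤ M^½` by operator
monotonicity of the square root, and conjugating by `P^½` gives `G ≤ P♯Q`.
-/

-- `MatrixOrder` makes `≤` the Loewner order, so that `loewnerLE A B` is `A ≤ B` by definition;
-- the operator norm makes matrices a C⋆-algebra, where `CFC.sqrt` is operator monotone.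
open scoped MatrixOrder Matrix.Norms.L2Operator

section

variable {l : Type*} [Fintype l]

lemma Matrix.PosSemidef.conjugate {M X : Matrix l l ℂ} (hM : M.PosSemidef) (hX : X.IsHermitian) :
    (X * M * X).PosSemidef := by
  simpa only [hX.eq] using hM.conjTranspose_mul_mul_same X

variable [DecidableEq l] {A B : Matrix l l ℂ}

lemma Matrix.PosDef.conjugate {M X : Matrix l l ℂ} (hM : M.PosDef) (hX : X.PosDef) :
    (X * M * X).PosDef := by
  simpa only [hX.1.eq] using hM.conjTranspose_mul_mul_same (mulVec_injective_of_isUnit hX.isUnit)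

lemma mrpow_eq_cfc (hA : A.IsHermitian) (r : ℝ) : mrpow A r = cfc (fun x : ℝ => x ^ r) A := by
  rw [hA.cfc_eq, IsHermitian.cfc, Unitary.conjStarAlgAut_apply, mrpow, dif_pos hA]
  rfl

lemma mrpow_add (hA : A.PosDef) (r r' : ℝ) : mrpow A (r + r') = mrpow A r * mrpow A r' := by
  rw [mrpow_eq_cfc hA.1, mrpow_eq_cfc hA.1, mrpow_eq_cfc hA.1,
    ← cfc_mul _ _ A (A.finite_real_spectrum.continuousOn _) (A.finite_real_spectrum.continuousOn _)]
  exact cfc_congr fun x hx => Real.rpow_add (hA.isStrictlyPositive.spectrum_pos hx) r r'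

lemma mrpow_zero (hA : A.IsHermitian) : mrpow A 0 = 1 := by
  simpa [mrpow_eq_cfc hA] using cfc_const_one ℝ A hA.isSelfAdjoint

lemma mrpow_one (hA : A.IsHermitian) : mrpow A 1 = A := by
  simpa [mrpow_eq_cfc hA] using cfc_id' ℝ A hA.isSelfAdjoint

lemma mrpow_posSemidef (hA : A.PosSemidef) (r : ℝ) : (mrpow A r).PosSemidef := by
  rw [mrpow_eq_cfc hA.1, ← nonneg_iff_posSemidef]
  exact cfc_nonneg fun x hx => Real.rpow_nonneg (spectrum_nonneg_of_nonneg hA.nonneg hx) r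

lemma mrpow_posDef (hA : A.PosDef) (r : ℝ) : (mrpow A r).PosDef := by
  rw [mrpow_eq_cfc hA.1, ← isStrictlyPositive_iff_posDef,
    cfc_isStrictlyPositive_iff _ _ (A.finite_real_spectrum.continuousOn _) hA.1.isSelfAdjoint]
  exact fun x hx => Real.rpow_pos_of_pos (hA.isStrictlyPositive.spectrum_pos hx) r

lemma mrpow_mul_mrpow_neg (hA : A.PosDef) (r : ℝ) : mrpow A r * mrpow A (-r) = 1 := by
  rw [← mrpow_add hA, add_neg_cancel, mrpow_zero hA.1]

lemma mrpow_neg_mul_mrpow (hA : A.PosDef) (r : ℝ) : mrpow A (-r) * mrpow A r = 1 := by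
  rw [← mrpow_add hA, neg_add_cancel, mrpow_zero hA.1]

lemma mrpow_inv (hA : A.PosDef) (r : ℝ) : (mrpow A r)⁻¹ = mrpow A (-r) :=
  inv_eq_left_inv (mrpow_neg_mul_mrpow hA r)

lemma wgmean_posSemidef (hA : A.PosSemidef) (hB : B.PosSemidef) (t : ℝ) :
    (wgmean A B t).PosSemidef :=
  (mrpow_posSemidef (hB.conjugate (mrpow_posSemidef hA _).1) t).conjugate
    (mrpow_posSemidef hA _).1

lemma posDef_mrpow_neg_half_conjugate (hA : A.PosDef) (hB : B.PosDef) :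
    (mrpow A (-(1/2)) * B * mrpow A (-(1/2))).PosDef :=
  hB.conjugate (mrpow_posDef hA _)

lemma wgmean_posDef (hA : A.PosDef) (hB : B.PosDef) (t : ℝ) : (wgmean A B t).PosDef :=
  (mrpow_posDef (posDef_mrpow_neg_half_conjugate hA hB) t).conjugate (mrpow_posDef hA _)

lemma wgmean_mul_inv_mul (hA : A.PosDef) (hB : B.PosDef) (t s u : ℝ) :
    wgmean A B t * (wgmean A B s)⁻¹ * wgmean A B u = wgmean A B (t - s + u) := by
  have hC := posDef_mrpow_neg_half_conjugate hA hB
  have hXR (Z : Matrix l l ℂ) : mrpow A (1/2) * (mrpow A (-(1/2)) * Z) = Z := by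
    rw [← mul_assoc, mrpow_mul_mrpow_neg hA, one_mul]
  have hRX (Z : Matrix l l ℂ) : mrpow A (-(1/2)) * (mrpow A (1/2) * Z) = Z := by
    rw [← mul_assoc, mrpow_neg_mul_mrpow hA, one_mul]
  unfold wgmean
  generalize mrpow A (-(1/2)) * B * mrpow A (-(1/2)) = C at hC ⊢
  rw [Matrix.mul_inv_rev, Matrix.mul_inv_rev, mrpow_inv hA, mrpow_inv hC, sub_eq_add_neg,
    mrpow_add hC, mrpow_add hC]
  simp only [mul_assoc, hXR, hRX]

lemma fromBlocks_wgmean_posSemidef (hA : A.PosDef) (hB : B.PosDef) (s : ℝ) :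
    (fromBlocks (wgmean A B s) (wgmean A B (1/2)) (wgmean A B (1/2))
      (wgmean A B (1 - s))).PosSemidef := by
  have hP := wgmean_posDef hA hB s
  have hG := (wgmean_posDef hA hB (1/2)).1
  have := hP.isUnit.invertible
  nth_rewrite 2 [← hG.eq]
  rw [hP.fromBlocks₁₁, hG.eq, wgmean_mul_inv_mul hA hB, show 1/2 - s + 1/2 = 1 - s by ring,
    sub_self]
  exact .zero

lemma fromBlocks_sum {ι m n o p α : Type*} [AddCommMonoid α] (s : Finset ι)
    (P : ι → Matrix m o α) (G : ι → Matrix m p α) (G' : ι → Matrix n o α) (Q : ι → Matrix n p α) :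
    fromBlocks (∑ i ∈ s, P i) (∑ i ∈ s, G i) (∑ i ∈ s, G' i) (∑ i ∈ s, Q i)
      = ∑ i ∈ s, fromBlocks (P i) (G i) (G' i) (Q i) := by
  ext (_ | _) (_ | _) <;> simp [Matrix.sum_apply]

lemma le_mrpow_half_of_mul_self_le {M H : Matrix l l ℂ} (hM : M.PosDef) (hH : H.IsHermitian)
    (hHM : H * H ≤ M) : H ≤ mrpow M (1/2) := by
  have hsqrt : CFC.sqrt M = mrpow M (1/2) := by
    rw [CFC.sqrt_eq_iff M _ hM.posSemidef.nonneg (mrpow_posDef hM _).posSemidef.nonneg,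
      ← mrpow_add hM, add_halves, mrpow_one hM.1]
  calc H ≤ CFC.abs H :=
        sub_nonneg.mp (CFC.abs_sub_self H hH ▸ smul_nonneg zero_le_two (CFC.negPart_nonneg H))
    _ = CFC.sqrt (H * H) := by rw [CFC.abs, hH.star_eq]
    _ ≤ CFC.sqrt M := CFC.sqrt_le_sqrt _ _ hHM
    _ = mrpow M (1/2) := hsqrt

lemma le_wgmean_half_of_fromBlocks_posSemidef {P Q G : Matrix l l ℂ} (hP : P.PosDef)
    (hQ : Q.PosDef) (hG : G.IsHermitian) (hPGQ : (fromBlocks P G G Q).PosSemidef) :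
    G ≤ wgmean P Q (1/2) := by
  have := hP.isUnit.invertible
  set X := mrpow P (1/2)
  set R := mrpow P (-(1/2))
  have hR : R.IsHermitian := (mrpow_posDef hP _).1
  have hschur : G * P⁻¹ * G ≤ Q := by
    have := (hP.fromBlocks₁₁ G Q).mp (by rwa [hG.eq])
    rwa [hG.eq] at this
  have hRR : R * R = P⁻¹ := by
    rw [← mrpow_add hP, ← neg_add, add_halves, ← mrpow_inv hP, mrpow_one hP.1]
  have hsq : (R * G * R) * (R * G * R) ≤ R * Q * R := calc
    _ = R * (G * P⁻¹ * G) * R := by simp only [← hRR, mul_assoc]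
    _ ≤ R * Q * R := hR.isSelfAdjoint.conjugate_le_conjugate hschur
  have hle := le_mrpow_half_of_mul_self_le (posDef_mrpow_neg_half_conjugate hP hQ)
    (hG.isSelfAdjoint.conjugate_self hR.isSelfAdjoint) hsq
  calc G = X * (R * G * R) * X := by
        rw [← mul_assoc, ← mul_assoc, mrpow_mul_mrpow_neg hP, one_mul, mul_assoc,
          mrpow_neg_mul_mrpow hP, mul_one]
    _ ≤ X * mrpow (R * Q * R) (1/2) * X :=
        (mrpow_posDef hP _).1.isSelfAdjoint.conjugate_le_conjugate hle
    _ = wgmean P Q (1/2) := rfl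

end

theorem callebaut_matrix_lower_general {l : Type*} [Fintype l] [DecidableEq l] (m : ℕ)
    (A B : Fin m → Matrix l l ℂ) (hA : ∀ j, (A j).PosDef) (hB : ∀ j, (B j).PosDef)
    (s : ℝ) :
    loewnerLE (∑ j, wgmean (A j) (B j) (1/2))
      (wgmean (∑ j, wgmean (A j) (B j) s) (∑ j, wgmean (A j) (B j) (1 - s)) (1/2)) := by
  rcases isEmpty_or_nonempty (Fin m) with hm | hm
  · simpa [loewnerLE] using wgmean_posSemidef PosSemidef.zero PosSemidef.zero (1/2)
  have hsum (t : ℝ) : (∑ j, wgmean (A j) (B j) t).PosDef :=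
    posDef_sum univ_nonempty fun j _ => wgmean_posDef (hA j) (hB j) t
  refine le_wgmean_half_of_fromBlocks_posSemidef (hsum s) (hsum (1 - s)) (hsum (1/2)).1 ?_
  rw [fromBlocks_sum]
  exact posSemidef_sum _ fun j _ => fromBlocks_wgmean_posSemidef (hA j) (hB j) s

theorem callebaut_matrix_lower {l : Type*} [Fintype l] [DecidableEq l] (m : ℕ)
    (A B : Fin m → Matrix l l ℂ) (hA : ∀ j, (A j).PosDef) (hB : ∀ j, (B j).PosDef)
    (s : ℝ) (hs0 : 0 ≤ s) (hs1 : s ≤ 1) :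
    loewnerLE (∑ j, wgmean (A j) (B j) (1/2))
      (wgmean (∑ j, wgmean (A j) (B j) s) (∑ j, wgmean (A j) (B j) (1 - s)) (1/2)) :=
  callebaut_matrix_lower_general m A B hA hB s
end

section
/- Matrix Callebaut inequality via tensor products: for positive definite matrices A_1,...,A_m, B_1,...,B_m and 1/2 ≤ s ≤ t ≤ 1, one has ∑_j (A_j ♯_s B_j) ⊗ ∑_j (A_j ♯_(1-s) B_j) + ∑_j (A_j ♯_(1-s) B_j) ⊗ ∑_j (A_j ♯_s B_j) ≤ ∑_j (A_j ♯_t B_j) ⊗ ∑_j (A_j ♯_(1-t) B_j) + ∑_j (A_j ♯_(1-t) B_j) ⊗ ∑_j (A_j ♯_t B_j) in the Loewner order. -/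
open Matrix Finset
open scoped ComplexOrder

/-!
Since `A ♯_(1-u) B = B ♯_u A` and `♯_u` commutes with `⊗ₖ`, expanding the Kronecker products
turns each side into a double sum over `(j, k)` of
`(A_j ⊗ B_k) ♯_u (B_j ⊗ A_k) + (A_j ⊗ B_k) ♯_(1-u) (B_j ⊗ A_k)`,
with `u = s` on the left and `u = t` on the right. Termwise,
`X ♯_u Y + X ♯_(1-u) Y = X^(1/2) (M^u + M^(1-u)) X^(1/2)` with `M = X^(-1/2) Y X^(-1/2)`,
and `x^u + x^(1-u)` grows with `|u - 1/2|` for every `x > 0`.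

The two identities about `♯` rest on the intertwining relation `X f(a) = f(b) X` for `X a = b X`,
which holds because `f` agrees with a polynomial on the finite spectra of `a` and `b`.
-/

open Polynomial
open scoped MatrixOrder Kronecker

theorem SemiconjBy.aeval {R A : Type*} [CommSemiring R] [Semiring A] [Algebra R A]
    {x a b : A} (h : SemiconjBy x a b) (q : R[X]) :
    SemiconjBy x (aeval a q) (aeval b q) := by
  induction q using Polynomial.induction_on' with
  | add p q hp hq => simpa only [map_add] using hp.add_right hq
  | monomial n c =>
    simpa only [aeval_monomial] using
      SemiconjBy.mul_right (Algebra.commute_algebraMap_right c x) (h.pow_right n)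

theorem Set.Finite.exists_polynomial_eqOn {F : Type*} [Field F] {s : Set F} (hs : s.Finite)
    (f : F → F) : ∃ q : F[X], s.EqOn q.eval f := by
  have := hs.to_subtype
  obtain ⟨q, hq⟩ := (Polynomial.exists_eval_eq_iff ((↑) : s → F) (f ∘ (↑))).2
    fun i j hij => by rw [Subtype.ext hij]
  exact ⟨q, fun x hx => hq ⟨x, hx⟩⟩

theorem SemiconjBy.cfc {A : Type*} [Ring A] [StarRing A] [TopologicalSpace A] [Algebra ℝ A]
    [ContinuousFunctionalCalculus ℝ A IsSelfAdjoint] {x a b : A} (h : SemiconjBy x a b)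
    (ha : (spectrum ℝ a).Finite) (hb : (spectrum ℝ b).Finite) (f : ℝ → ℝ)
    (ha' : IsSelfAdjoint a := by cfc_tac) (hb' : IsSelfAdjoint b := by cfc_tac) :
    SemiconjBy x (cfc f a) (cfc f b) := by
  obtain ⟨q, hq⟩ := (ha.union hb).exists_polynomial_eqOn f
  rw [cfc_congr (hq.mono Set.subset_union_left).symm,
    cfc_congr (hq.mono Set.subset_union_right).symm, cfc_polynomial q a, cfc_polynomial q b]
  exact h.aeval q

theorem Real.rpow_add_rpow_one_sub_le {x s t : ℝ} (hx : 0 < x) (hst : s ≤ t) (h : 1 ≤ s + t) :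
    x ^ s + x ^ (1 - s) ≤ x ^ t + x ^ (1 - t) := by
  have hfactor : x ^ t + x ^ (1 - t) - (x ^ s + x ^ (1 - s)) =
      (x ^ t - x ^ s) * (1 - x ^ (1 - s - t)) := by
    have h₁ : x ^ t * x ^ (1 - s - t) = x ^ (1 - s) := by rw [← rpow_add hx]; ring_nf
    have h₂ : x ^ s * x ^ (1 - s - t) = x ^ (1 - t) := by rw [← rpow_add hx]; ring_nf
    linear_combination h₁ - h₂
  have hexp : 1 - s - t ≤ 0 := by linarith
  rw [← sub_nonneg, hfactor]
  rcases le_total 1 x with hx1 | hx1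
  · exact mul_nonneg (sub_nonneg.2 (rpow_le_rpow_of_exponent_le hx1 hst))
      (sub_nonneg.2 (rpow_le_one_of_one_le_of_nonpos hx1 hexp))
  · exact mul_nonneg_of_nonpos_of_nonpos (sub_nonpos.2 (rpow_le_rpow_of_exponent_ge hx hx1 hst))
      (sub_nonpos.2 (one_le_rpow_of_pos_of_le_one_of_nonpos hx hx1 hexp))

section Rpow

variable {A : Type*} [PartialOrder A] [Ring A] [StarRing A] [TopologicalSpace A]
  [StarOrderedRing A] [Algebra ℝ A] [ContinuousFunctionalCalculus ℝ A IsSelfAdjoint]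
  [NonnegSpectrumClass ℝ A]

theorem CFC.rpow_mul_mul_rpow_nonneg {a b : A} (hb : 0 ≤ b) (x : ℝ) :
    0 ≤ a ^ x * b * a ^ x :=
  IsSelfAdjoint.conjugate_nonneg hb rpow_nonneg.isSelfAdjoint

theorem IsStrictlyPositive.rpow_mul_mul_rpow {a b : A} (ha : IsStrictlyPositive a)
    (hb : IsStrictlyPositive b) (x : ℝ) : IsStrictlyPositive (a ^ x * b * a ^ x) :=
  have hax := (IsStrictlyPositive.rpow a x ha).isUnit
  ((hax.mul hb.isUnit).mul hax).isStrictlyPositive (CFC.rpow_mul_mul_rpow_nonneg hb.nonneg x)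

theorem CFC.rpow_add_rpow_one_sub_le [IsSemitopologicalRing A] [T2Space A] {a : A} {s t : ℝ}
    (hst : s ≤ t) (h : 1 ≤ s + t) (ha : IsStrictlyPositive a := by cfc_tac) :
    a ^ s + a ^ (1 - s) ≤ a ^ t + a ^ (1 - t) := by
  have hcont (u : ℝ) : ContinuousOn (· ^ u) (spectrum ℝ a) :=
    continuousOn_id.rpow_const fun x hx => .inl (ha.spectrum_pos hx).ne'
  rw [rpow_eq_cfc_real, rpow_eq_cfc_real, rpow_eq_cfc_real, rpow_eq_cfc_real,
    ← cfc_add a _ _ (hcont s) (hcont (1 - s)), ← cfc_add a _ _ (hcont t) (hcont (1 - t))]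
  exact cfc_mono fun x hx => Real.rpow_add_rpow_one_sub_le (ha.spectrum_pos hx) hst h

end Rpow

namespace Matrix

theorem sum_kronecker_sum {α ι κ l m n p : Type*} [NonUnitalNonAssocSemiring α] (s : Finset ι)
    (t : Finset κ) (f : ι → Matrix l m α) (g : κ → Matrix n p α) :
    (∑ i ∈ s, f i) ⊗ₖ (∑ j ∈ t, g j) = ∑ i ∈ s, ∑ j ∈ t, f i ⊗ₖ g j := by
  ext ⟨i, i'⟩ ⟨j, j'⟩
  simp [sum_apply, sum_mul_sum]

variable {𝕜 n m : Type*} [RCLike 𝕜] [Fintype n] [DecidableEq n] [Fintype m] [DecidableEq m]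

theorem cfc_diagonal (d : n → ℝ) (f : ℝ → ℝ) :
    cfc f (diagonal fun i => (d i : 𝕜)) = diagonal fun i => (f (d i) : 𝕜) := by
  have hD : (diagonal fun i => (d i : 𝕜)).IsHermitian :=
    isHermitian_diagonal_of_self_adjoint _ (by ext; simp)
  obtain ⟨q, hq⟩ :=
    ((diagonal fun i => (d i : 𝕜)).finite_real_spectrum.union
      (Set.finite_range d)).exists_polynomial_eqOn f
  have hpi : aeval (fun i => (d i : 𝕜)) q = fun i => ((q.eval (d i) : ℝ) : 𝕜) := by
    ext i
    simp [aeval_pi_apply₂, ← RCLike.algebraMap_eq_ofReal, aeval_algebraMap_apply]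
  rw [cfc_congr (hq.mono Set.subset_union_left).symm, cfc_polynomial q _ hD.isSelfAdjoint,
    ← diagonalAlgHom_apply ℝ, aeval_algHom_apply, hpi, diagonalAlgHom_apply]
  exact congrArg diagonal (funext fun i => congrArg _ (hq (Set.mem_union_right _ ⟨i, rfl⟩)))

theorem cfc_unitary_conj_diagonal {U : Matrix n n 𝕜} (hU : U ∈ unitary (Matrix n n 𝕜))
    (d : n → ℝ) (f : ℝ → ℝ) :
    cfc f (U * diagonal (fun i => (d i : 𝕜)) * star U) =
      U * diagonal (fun i => (f (d i) : 𝕜)) * star U := by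
  set D := diagonal fun i => (d i : 𝕜)
  have hD : IsSelfAdjoint D := isHermitian_diagonal_of_self_adjoint _ (by ext; simp)
  have hsemi : SemiconjBy U D (U * D * star U) := by
    rw [SemiconjBy, mul_assoc _ (star U), Unitary.star_mul_self_of_mem hU, mul_one]
  have hcfc := hsemi.cfc finite_real_spectrum finite_real_spectrum f hD (hD.conjugate U)
  rw [SemiconjBy, cfc_diagonal] at hcfc
  rw [hcfc, mul_assoc _ U, Unitary.mul_star_self_of_mem hU, mul_one]

theorem PosSemidef.exists_eq_unitary_conj_diagonal {P : Matrix n n 𝕜} (hP : P.PosSemidef) :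
    ∃ U ∈ unitary (Matrix n n 𝕜), ∃ d : n → ℝ, (∀ i, 0 ≤ d i) ∧
      P = U * diagonal (fun i => (d i : 𝕜)) * star U :=
  ⟨_, hP.1.eigenvectorUnitary.2, _, hP.eigenvalues_nonneg, hP.1.spectral_theorem⟩

theorem rpow_kronecker {P : Matrix n n 𝕜} {Q : Matrix m m 𝕜} (hP : P.PosSemidef)
    (hQ : Q.PosSemidef) (r : ℝ) : (P ⊗ₖ Q) ^ r = (P ^ r) ⊗ₖ (Q ^ r) := by
  rw [CFC.rpow_eq_cfc_real (hP.kronecker hQ).nonneg, CFC.rpow_eq_cfc_real hP.nonneg,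
    CFC.rpow_eq_cfc_real hQ.nonneg]
  obtain ⟨U, hU, d, hd, rfl⟩ := hP.exists_eq_unitary_conj_diagonal
  obtain ⟨V, hV, e, he, rfl⟩ := hQ.exists_eq_unitary_conj_diagonal
  have hUV : (U * diagonal (fun i => (d i : 𝕜)) * star U) ⊗ₖ
        (V * diagonal (fun i => (e i : 𝕜)) * star V) =
      (U ⊗ₖ V) * diagonal (fun ij => ((d ij.1 * e ij.2 : ℝ) : 𝕜)) * star (U ⊗ₖ V) := by
    simp [mul_kronecker_mul, diagonal_kronecker_diagonal, star_eq_conjTranspose,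
      conjTranspose_kronecker]
  rw [hUV, cfc_unitary_conj_diagonal (kronecker_mem_unitary hU hV), cfc_unitary_conj_diagonal hU,
    cfc_unitary_conj_diagonal hV]
  simp [mul_kronecker_mul, diagonal_kronecker_diagonal, star_eq_conjTranspose,
    conjTranspose_kronecker, Real.mul_rpow (hd _) (he _)]

theorem rpow_one_sub_mul_star_self {T : Matrix n n 𝕜} (hT : IsUnit T) (t : ℝ) :
    (T * star T) ^ (1 - t) = T * (star T * T)⁻¹ ^ t * star T := by
  have hTT : IsStrictlyPositive (T * star T) :=
    (hT.mul hT.star).isStrictlyPositive (mul_star_self_nonneg T)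
  have hTT' : IsStrictlyPositive (star T * T) :=
    (hT.star.mul hT).isStrictlyPositive (star_mul_self_nonneg T)
  have hintertwine : T * (star T * T) ^ (-t) = (T * star T) ^ (-t) * T := by
    have hsemi : SemiconjBy T (star T * T) (T * star T) := (mul_assoc _ _ _).symm
    rw [CFC.rpow_eq_cfc_real hTT.nonneg, CFC.rpow_eq_cfc_real hTT'.nonneg]
    exact hsemi.cfc finite_real_spectrum finite_real_spectrum _
  calc (T * star T) ^ (1 - t)
      = (T * star T) ^ (-t) * T * star T := by
        rw [sub_eq_neg_add, CFC.rpow_add hTT.isUnit, CFC.rpow_one _ hTT.nonneg, mul_assoc]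
    _ = T * (star T * T) ^ (-t) * star T := by rw [hintertwine]
    _ = T * (star T * T)⁻¹ ^ t * star T := by
        rw [← hTT'.isUnit.unit_spec, CFC.rpow_neg _ t hTT'.nonneg, coe_units_inv]

end Matrix

section GeometricMean

variable {l k : Type*} [Fintype l] [DecidableEq l] [Fintype k] [DecidableEq k]

theorem mrpow_eq_rpow {A : Matrix l l ℂ} (hA : A.PosSemidef) (r : ℝ) : mrpow A r = A ^ r := by
  rw [CFC.rpow_eq_cfc_real hA.nonneg, hA.1.cfc_eq, mrpow, dif_pos hA.1]
  rfl

theorem wgmean_eq_rpow {A B : Matrix l l ℂ} (hA : A.PosSemidef) (hB : B.PosSemidef) (t : ℝ) :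
    wgmean A B t =
      A ^ (1/2 : ℝ) * (A ^ (-(1/2) : ℝ) * B * A ^ (-(1/2) : ℝ)) ^ t * A ^ (1/2 : ℝ) := by
  rw [wgmean, mrpow_eq_rpow hA, mrpow_eq_rpow hA,
    mrpow_eq_rpow (CFC.rpow_mul_mul_rpow_nonneg hB.nonneg _).posSemidef]

theorem wgmean_kronecker {A B : Matrix l l ℂ} {C D : Matrix k k ℂ} (hA : A.PosSemidef)
    (hB : B.PosSemidef) (hC : C.PosSemidef) (hD : D.PosSemidef) (t : ℝ) :
    wgmean (A ⊗ₖ C) (B ⊗ₖ D) t = wgmean A B t ⊗ₖ wgmean C D t := by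
  rw [wgmean_eq_rpow (hA.kronecker hC) (hB.kronecker hD), wgmean_eq_rpow hA hB,
    wgmean_eq_rpow hC hD, rpow_kronecker hA hC, rpow_kronecker hA hC, ← mul_kronecker_mul,
    ← mul_kronecker_mul, rpow_kronecker (CFC.rpow_mul_mul_rpow_nonneg hB.nonneg _).posSemidef
      (CFC.rpow_mul_mul_rpow_nonneg hD.nonneg _).posSemidef, ← mul_kronecker_mul,
    ← mul_kronecker_mul]

theorem wgmean_comm {A B : Matrix l l ℂ} (hA : A.PosDef) (hB : B.PosDef) (t : ℝ) :
    wgmean B A t = wgmean A B (1 - t) := by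
  have ha := hA.isStrictlyPositive
  have hb := hB.isStrictlyPositive
  have hsqrt {X : Matrix l l ℂ} (hX : IsStrictlyPositive X) :
      X ^ (1/2 : ℝ) * X ^ (1/2 : ℝ) = X := by
    rw [← CFC.sqrt_eq_rpow, CFC.sqrt_mul_sqrt_self X hX.nonneg]
  have hinv {X : Matrix l l ℂ} (hX : IsStrictlyPositive X) :
      (X ^ (-(1/2) : ℝ))⁻¹ = X ^ (1/2 : ℝ) :=
    inv_eq_left_inv (CFC.rpow_mul_rpow_neg _)
  have hinv' {X : Matrix l l ℂ} (hX : IsStrictlyPositive X) :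
      (X ^ (1/2 : ℝ))⁻¹ = X ^ (-(1/2) : ℝ) :=
    inv_eq_left_inv (CFC.rpow_neg_mul_rpow _)
  set T := A ^ (-(1/2) : ℝ) * B ^ (1/2 : ℝ) with hT
  have hTunit : IsUnit T :=
    (IsStrictlyPositive.rpow A _ ha).isUnit.mul (IsStrictlyPositive.rpow B _ hb).isUnit
  have hstar : star T = B ^ (1/2 : ℝ) * A ^ (-(1/2) : ℝ) := by
    rw [hT, star_mul, CFC.rpow_nonneg.isSelfAdjoint.star_eq, CFC.rpow_nonneg.isSelfAdjoint.star_eq]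
  have hM : A ^ (-(1/2) : ℝ) * B * A ^ (-(1/2) : ℝ) = T * star T := by
    rw [hstar, hT]
    conv_lhs => rw [← hsqrt hb]
    simp only [mul_assoc]
  have hN : B ^ (-(1/2) : ℝ) * A * B ^ (-(1/2) : ℝ) = (star T * T)⁻¹ := by
    rw [hstar, hT]
    conv_lhs => rw [← hsqrt ha]
    simp only [Matrix.mul_inv_rev, hinv ha, hinv' hb, mul_assoc]
  rw [wgmean_eq_rpow hB.posSemidef hA.posSemidef, wgmean_eq_rpow hA.posSemidef hB.posSemidef, hM,
    Matrix.rpow_one_sub_mul_star_self hTunit, ← hN, hstar, hT]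
  simp only [← mul_assoc]
  rw [CFC.rpow_mul_rpow_neg, one_mul]
  simp only [mul_assoc]
  rw [CFC.rpow_neg_mul_rpow, mul_one]

theorem wgmean_add_wgmean_one_sub_le {A B : Matrix l l ℂ} (hA : A.PosDef) (hB : B.PosDef)
    {s t : ℝ} (hst : s ≤ t) (h : 1 ≤ s + t) :
    wgmean A B s + wgmean A B (1 - s) ≤ wgmean A B t + wgmean A B (1 - t) := by
  simp only [wgmean_eq_rpow hA.posSemidef hB.posSemidef, ← mul_add, ← add_mul]
  exact CFC.rpow_nonneg.isSelfAdjoint.conjugate_le_conjugate <| CFC.rpow_add_rpow_one_sub_le hst h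
    (hA.isStrictlyPositive.rpow_mul_mul_rpow hB.isStrictlyPositive _)

theorem sum_wgmean_kronecker_sum_wgmean {ι : Type*} [Fintype ι] {A B : ι → Matrix l l ℂ}
    (hA : ∀ j, (A j).PosDef) (hB : ∀ j, (B j).PosDef) (t : ℝ) :
    (∑ j, wgmean (A j) (B j) t) ⊗ₖ (∑ j, wgmean (A j) (B j) (1 - t)) =
      ∑ j, ∑ k, wgmean (A j ⊗ₖ B k) (B j ⊗ₖ A k) t := by
  rw [Matrix.sum_kronecker_sum]
  refine sum_congr rfl fun j _ => sum_congr rfl fun k _ => ?_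
  rw [← wgmean_comm (hA k) (hB k), wgmean_kronecker (hA j).posSemidef (hB j).posSemidef
    (hB k).posSemidef (hA k).posSemidef]

end GeometricMean

open Kronecker in
theorem callebaut_tensor_general {l : Type*} [Fintype l] [DecidableEq l] (m : ℕ)
    (A B : Fin m → Matrix l l ℂ) (hA : ∀ j, (A j).PosDef) (hB : ∀ j, (B j).PosDef)
    (s t : ℝ) (hs : 1/2 ≤ s) (hst : s ≤ t) :
    loewnerLE
      ((∑ j, wgmean (A j) (B j) s) ⊗ₖ (∑ j, wgmean (A j) (B j) (1 - s)) +
        (∑ j, wgmean (A j) (B j) (1 - s)) ⊗ₖ (∑ j, wgmean (A j) (B j) s))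
      ((∑ j, wgmean (A j) (B j) t) ⊗ₖ (∑ j, wgmean (A j) (B j) (1 - t)) +
        (∑ j, wgmean (A j) (B j) (1 - t)) ⊗ₖ (∑ j, wgmean (A j) (B j) t)) := by
  have hswap (u : ℝ) := sum_wgmean_kronecker_sum_wgmean hA hB u
  have hswap' (u : ℝ) : (∑ j, wgmean (A j) (B j) (1 - u)) ⊗ₖ (∑ j, wgmean (A j) (B j) u) =
      ∑ j, ∑ k, wgmean (A j ⊗ₖ B k) (B j ⊗ₖ A k) (1 - u) := by
    simpa only [sub_sub_cancel] using hswap (1 - u)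
  rw [loewnerLE, ← Matrix.le_iff, hswap, hswap, hswap', hswap']
  simp only [← sum_add_distrib]
  exact sum_le_sum fun j _ => sum_le_sum fun k _ => wgmean_add_wgmean_one_sub_le
    ((hA j).kronecker (hB k)) ((hB j).kronecker (hA k)) hst (by linarith)

open Kronecker in
theorem callebaut_tensor {l : Type*} [Fintype l] [DecidableEq l] (m : ℕ)
    (A B : Fin m → Matrix l l ℂ) (hA : ∀ j, (A j).PosDef) (hB : ∀ j, (B j).PosDef)
    (s t : ℝ) (hs : 1/2 ≤ s) (hst : s ≤ t) (ht : t ≤ 1) :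
    loewnerLE
      ((∑ j, wgmean (A j) (B j) s) ⊗ₖ (∑ j, wgmean (A j) (B j) (1 - s)) +
        (∑ j, wgmean (A j) (B j) (1 - s)) ⊗ₖ (∑ j, wgmean (A j) (B j) s))
      ((∑ j, wgmean (A j) (B j) t) ⊗ₖ (∑ j, wgmean (A j) (B j) (1 - t)) +
        (∑ j, wgmean (A j) (B j) (1 - t)) ⊗ₖ (∑ j, wgmean (A j) (B j) t)) :=
  callebaut_tensor_general m A B hA hB s t hs hst
end
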